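/- If 𝓘 is a lower integral on a set A, then μ(U) := 𝓘(𝟙_U), for U an open subset of A, defines a valuation on A: μ is ω-continuous, μ(∅) = 0, and μ(U) + μ(V) = μ(U ∪ V) + μ(U ∩ V) for all opens U, V. If 𝓘(𝟙_A) ≤ 1, then μ(A) ≤ 1. -/
import Mathlib


/-- The initial σ-frame `𝕊`, as the least subset of the propositions `Ω = Prop`
containing `False` and `True` and closed under joins of increasing ω-chains
(equivalently, the image of the free ω-cpo completion of `𝔹 = {⊥ ≤ ⊤}` in `Ω`). -/
inductive InS : Prop → Prop
  | bot : InS False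
  | top : InS True
  | sup (c : ℕ → Prop) (mono : ∀ n, c n → c (n + 1)) (h : ∀ n, InS (c n)) :
      InS (∃ n, c n)

theorem InS.of_decidable (p : Prop) [Decidable p] : InS p := by
  by_cases h : p
  · rw [eq_true h]; exact InS.top
  · rw [eq_false h]; exact InS.bot

/-- A map between preorders is ω-(Scott-)continuous if it is monotone and preserves
least upper bounds of enumerable directed subsets. -/
def OmegaContinuous {C D : Type} [Preorder C] [Preorder D] (f : C → D) : Prop :=
  Monotone f ∧
    ∀ (U : Set C) (x : C), U.Countable → U.Nonempty → DirectedOn (· ≤ ·) U →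
      IsLUB U x → IsLUB (f '' U) (f x)

/-- A preorder is an ω-cpo if every enumerable directed subset has a least upper bound. -/
def IsOmegaCPO (C : Type) [Preorder C] : Prop :=
  ∀ U : Set C, U.Countable → U.Nonempty → DirectedOn (· ≤ ·) U → ∃ x, IsLUB U x

/-- A cover-preserving monotone map from an ω-cpo presentation `(P, Cov)` into an
ordered set: the image of each cover has a least upper bound above the image of the
covered element. -/
def CovMorphism {P C : Type} [Preorder P] [Preorder C]
    (Cov : P → Set P → Prop) (f : P → C) : Prop :=
  Monotone f ∧ ∀ p U, Cov p U → ∃ s, IsLUB (f '' U) s ∧ f p ≤ s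

/-- `(Pω, η)` is the free ω-cpo completion of the ω-cpo presentation `(P, Cov)`:
`Pω` is an ω-cpo, `η` is a cover-preserving monotone map, and every cover-preserving
monotone map from `P` into an ω-cpo extends uniquely to an ω-continuous map on `Pω`. -/
structure IsFreeOmegaCompletion {P : Type} [Preorder P] (Cov : P → Set P → Prop)
    (Pω : Type) [PartialOrder Pω] (η : P → Pω) : Prop where
  cpo : IsOmegaCPO Pω
  eta_morph : CovMorphism Cov η
  extend_unique : ∀ (C : Type) [PartialOrder C], IsOmegaCPO C →
    ∀ f : P → C, CovMorphism Cov f →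
      ∃! g : Pω → C, OmegaContinuous g ∧ ∀ p, g (η p) = f p

/-- The Sierpinski space as a subtype of the propositions, ordered by implication. -/
abbrev Sierp := {p : Prop // InS p}

theorem InS.or {p q : Prop} (hp : InS p) (hq : InS q) : InS (p ∨ q) := by
  induction hp with
  | bot => simp only [false_or]; exact hq
  | top => simp only [true_or]; exact InS.top
  | sup c mono h ih =>
      have e : ((∃ n, c n) ∨ q) = (∃ n, c n ∨ q) := propext <| by
        constructor
        · rintro (⟨n, hn⟩ | hq')
          · exact ⟨n, Or.inl hn⟩
          · exact ⟨0, Or.inr hq'⟩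
        · rintro ⟨n, hn | hq'⟩
          · exact Or.inl ⟨n, hn⟩
          · exact Or.inr hq'
      rw [e]
      exact InS.sup _ (fun n => Or.imp_left (mono n)) ih

theorem InS.and {p q : Prop} (hp : InS p) (hq : InS q) : InS (p ∧ q) := by
  induction hp with
  | bot => simp only [false_and]; exact InS.bot
  | top => simp only [true_and]; exact hq
  | sup c mono h ih =>
      have e : ((∃ n, c n) ∧ q) = (∃ n, c n ∧ q) := propext <| by
        constructor
        · rintro ⟨⟨n, hn⟩, hq'⟩
          exact ⟨n, hn, hq'⟩
        · rintro ⟨n, hn, hq'⟩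
          exact ⟨⟨n, hn⟩, hq'⟩
      rw [e]
      exact InS.sup _ (fun n => And.imp_left (mono n)) ih

theorem InS.exists_nat (p : ℕ → Prop) (h : ∀ n, InS (p n)) : InS (∃ n, p n) := by
  have key : ∀ m, InS (∃ k, k ≤ m ∧ p k) := by
    intro m
    induction m with
    | zero =>
        have e : (∃ k, k ≤ 0 ∧ p k) = p 0 := propext <| by
          constructor
          · rintro ⟨k, hk, hp⟩
            rwa [Nat.le_zero.mp hk] at hp
          · exact fun hp => ⟨0, le_refl _, hp⟩
        rw [e]; exact h 0
    | succ m ih =>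
        have e : (∃ k, k ≤ m + 1 ∧ p k) = ((∃ k, k ≤ m ∧ p k) ∨ p (m + 1)) :=
          propext <| by
            constructor
            · rintro ⟨k, hk, hp⟩
              rcases Nat.eq_or_lt_of_le hk with rfl | hk'
              · exact Or.inr hp
              · exact Or.inl ⟨k, Nat.lt_succ_iff.mp hk', hp⟩
            · rintro (⟨k, hk, hp⟩ | hp)
              · exact ⟨k, hk.trans (Nat.le_succ m), hp⟩
              · exact ⟨m + 1, le_refl _, hp⟩
        rw [e]; exact ih.or (h (m + 1))
  have e : (∃ n, p n) = (∃ m, ∃ k, k ≤ m ∧ p k) := propext <| by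
    constructor
    · rintro ⟨n, hn⟩
      exact ⟨n, n, le_refl _, hn⟩
    · rintro ⟨m, k, _, hk⟩
      exact ⟨k, hk⟩
  rw [e]
  exact InS.sup _ (fun m ⟨k, hk, hp⟩ => ⟨k, hk.trans (Nat.le_succ m), hp⟩) key

def Sierp.botS : Sierp := ⟨False, InS.bot⟩
def Sierp.topS : Sierp := ⟨True, InS.top⟩
def Sierp.or (s t : Sierp) : Sierp := ⟨s.1 ∨ t.1, s.2.or t.2⟩
def Sierp.and (s t : Sierp) : Sierp := ⟨s.1 ∧ t.1, s.2.and t.2⟩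

/-- Enumerable joins in the Sierpinski space. -/
def Sierp.joinSeq (s : ℕ → Sierp) : Sierp :=
  ⟨∃ n, (s n).1, InS.exists_nat _ (fun n => (s n).2)⟩

/-- A lower real: an `𝕊`-valued, inhabited, rounded, downward-closed cut of rationals. -/
structure LowerReal where
  cut : ℚ → Prop
  inS : ∀ q, InS (cut q)
  inhab : ∃ q, cut q
  rounded : ∀ q, cut q → ∃ q', q < q' ∧ cut q'
  lower : ∀ q q', q < q' → cut q' → cut q

instance : Preorder LowerReal where
  le L₁ L₂ := ∀ q, L₁.cut q → L₂.cut q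
  le_refl _ _ h := h
  le_trans _ _ _ h₁ h₂ q hq := h₂ q (h₁ q hq)

/-- The lower real associated to a rational number. -/
def ratLR (q : ℚ) : LowerReal where
  cut p := p < q
  inS _ := InS.of_decidable _
  inhab := ⟨q - 1, by linarith⟩
  rounded p hp := ⟨(p + q) / 2, by constructor <;> linarith⟩
  lower _ _ h h' := lt_trans h h'

/-- The non-negative rationals. -/
abbrev QPlus := {q : ℚ // 0 ≤ q}

/-- The non-negative lower reals `ℝ_l⁺`. -/
abbrev NNLowerReal := {L : LowerReal // ∀ q : ℚ, q < 0 → L.cut q}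

/-- The non-negative lower real associated to a non-negative rational. -/
def ratNN (q : QPlus) : NNLowerReal :=
  ⟨ratLR q.1, fun _ hp => lt_of_lt_of_le hp q.2⟩

def zeroNN : NNLowerReal := ratNN ⟨0, le_refl 0⟩
def oneNN : NNLowerReal := ratNN ⟨1, by norm_num⟩

/-- `r : 𝕊 → ℝ_l⁺`, the unique ω-continuous map with `r ⊥ = 0` and `r ⊤ = 1`;
`indicatorLR (U a)` is the real indicator function `𝟙_U` of an open `U`. -/
def indicatorLR (s : Sierp) : NNLowerReal :=
  ⟨{ cut := fun q => q < 0 ∨ (s.1 ∧ q < 1)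
     inS := fun q => by
       show InS (q < 0 ∨ (s.1 ∧ q < 1))
       by_cases h0 : q < 0
       · rw [eq_true (Or.inl h0 : q < 0 ∨ (s.1 ∧ q < 1))]; exact InS.top
       · rw [eq_false h0, false_or]
         by_cases h1 : q < 1
         · rw [eq_true h1, and_true]; exact s.2
         · rw [eq_false h1, and_false]; exact InS.bot
     inhab := ⟨-1, Or.inl (by norm_num)⟩
     rounded := fun q hq => by
       rcases hq with h | ⟨hs, h1⟩
       · exact ⟨q / 2, by linarith, Or.inl (by linarith)⟩
       · exact ⟨(q + 1) / 2, by
           constructor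
           · linarith
           · exact Or.inr ⟨hs, by linarith⟩⟩
     lower := fun q q' h hq' => by
       rcases hq' with h' | ⟨hs, h1⟩
       · exact Or.inl (lt_trans h h')
       · by_cases h0 : q < 0
         · exact Or.inl h0
         · exact Or.inr ⟨hs, lt_trans h h1⟩ },
   fun q hq => Or.inl hq⟩

/-- Specification of the addition on the non-negative lower reals: ω-continuous in
each argument and extending addition of non-negative rationals. -/
def AddSpecNN (add : NNLowerReal → NNLowerReal → NNLowerReal) : Prop :=
  (∀ L, OmegaContinuous (add L)) ∧ (∀ L, OmegaContinuous (fun x => add x L)) ∧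
    ∀ q q' : QPlus, add (ratNN q) (ratNN q') = ratNN ⟨q.1 + q'.1, add_nonneg q.2 q'.2⟩

/-- Specification of the multiplication on the non-negative lower reals: ω-continuous
in each argument and extending multiplication of non-negative rationals. -/
def MulSpecNN (mul : NNLowerReal → NNLowerReal → NNLowerReal) : Prop :=
  (∀ L, OmegaContinuous (mul L)) ∧ (∀ L, OmegaContinuous (fun x => mul x L)) ∧
    ∀ q q' : QPlus, mul (ratNN q) (ratNN q') = ratNN ⟨q.1 * q'.1, mul_nonneg q.2 q'.2⟩

/-- A lower integral on `A`: an ω-continuous, bottom-preserving, additive map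
`(A → ℝ_l⁺) → ℝ_l⁺`. -/
def IsLowerIntegral {A : Type} (add : NNLowerReal → NNLowerReal → NNLowerReal)
    (I : (A → NNLowerReal) → NNLowerReal) : Prop :=
  OmegaContinuous I ∧ I (fun _ => zeroNN) = zeroNN ∧
    ∀ f g : A → NNLowerReal, I (fun a => add (f a) (g a)) = add (I f) (I g)

/-- A valuation on `A`: an ω-continuous, bottom-preserving, modular map
`𝒪(A) = (A → 𝕊) → ℝ_l⁺`. -/
def IsValuation {A : Type} (add : NNLowerReal → NNLowerReal → NNLowerReal)
    (μ : (A → Sierp) → NNLowerReal) : Prop :=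
  OmegaContinuous μ ∧ μ (fun _ => Sierp.botS) = zeroNN ∧
    ∀ U V : A → Sierp,
      add (μ U) (μ V) =
        add (μ (fun a => (U a).or (V a))) (μ (fun a => (U a).and (V a)))


section ValuationHelpers

theorem LowerReal.ext' {L M : LowerReal} (h : ∀ q, L.cut q ↔ M.cut q) : L = M := by
  have hc : L.cut = M.cut := funext fun q => propext (h q)
  cases L; cases M; cases hc; rfl

theorem NN.ext {x y : NNLowerReal} (h : ∀ q, x.1.cut q ↔ y.1.cut q) : x = y :=
  Subtype.ext (LowerReal.ext' h)

theorem NN.le_antisymm {x y : NNLowerReal} (h1 : x ≤ y) (h2 : y ≤ x) : x = y :=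
  NN.ext fun q => ⟨h1 q, h2 q⟩

theorem NN.zero_le (x : NNLowerReal) : zeroNN ≤ x := fun q hq => x.2 q hq

theorem NN.zero_le_one : zeroNN ≤ oneNN := fun q hq => lt_trans hq one_pos

theorem indicatorLR_mono : Monotone indicatorLR := fun _ _ h _ hq =>
  hq.imp id (And.imp_left h)

theorem indicator_bot : indicatorLR Sierp.botS = zeroNN :=
  NN.ext fun _ => ⟨fun h => h.elim id (fun h' => h'.1.elim), Or.inl⟩

/-- The set of which `𝟙_s` is the least upper bound. -/
def Tset (s : Sierp) : Set NNLowerReal := {x | x = zeroNN ∨ (s.1 ∧ x = oneNN)}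

theorem Tset_isLUB (s : Sierp) : IsLUB (Tset s) (indicatorLR s) := by
  constructor
  · rintro x (rfl | ⟨hs, rfl⟩)
    · exact fun q hq => Or.inl hq
    · exact fun q hq => Or.inr ⟨hs, hq⟩
  · intro g hg q hq
    rcases (hq : _ ∨ _) with h0 | ⟨hs, h1⟩
    · exact hg (Or.inl rfl) q h0
    · exact hg (Or.inr ⟨hs, rfl⟩) q h1

theorem Tset_countable (s : Sierp) : (Tset s).Countable := by
  have sub : Tset s ⊆ {zeroNN, oneNN} := by
    rintro x (rfl | ⟨_, rfl⟩)
    · exact Or.inl rfl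
    · exact Or.inr rfl
  exact ((Set.toFinite ({zeroNN, oneNN} : Set NNLowerReal)).subset sub).countable

theorem Tset_nonempty (s : Sierp) : (Tset s).Nonempty := ⟨zeroNN, Or.inl rfl⟩

theorem Tset_directed (s : Sierp) : DirectedOn (· ≤ ·) (Tset s) := by
  rintro x (rfl | ⟨hs, rfl⟩) y (rfl | ⟨ht, rfl⟩)
  · exact ⟨zeroNN, Or.inl rfl, le_refl _, le_refl _⟩
  · exact ⟨oneNN, Or.inr ⟨ht, rfl⟩, NN.zero_le_one, le_refl _⟩
  · exact ⟨oneNN, Or.inr ⟨hs, rfl⟩, le_refl _, NN.zero_le_one⟩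
  · exact ⟨oneNN, Or.inr ⟨hs, rfl⟩, le_refl _, le_refl _⟩

theorem isLUB_nested {α β : Type} [Preorder β] {S : Set α} {f : α → β} {G : α → Set β}
    {c : β} (hf : ∀ x ∈ S, IsLUB (G x) (f x)) (hc : IsLUB (f '' S) c) :
    IsLUB (⋃ x ∈ S, G x) c := by
  constructor
  · rintro z hz
    simp only [Set.mem_iUnion] at hz
    obtain ⟨x, hx, hzx⟩ := hz
    exact le_trans ((hf x hx).1 hzx) (hc.1 ⟨x, hx, rfl⟩)
  · intro g hg
    apply hc.2
    rintro _ ⟨x, hx, rfl⟩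
    exact (hf x hx).2 (fun z hz => hg (Set.mem_biUnion hx hz))

theorem ratNN_congr {a b : QPlus} (h : a.1 = b.1) : ratNN a = ratNN b :=
  congrArg ratNN (Subtype.ext h)

variable {add : NNLowerReal → NNLowerReal → NNLowerReal}

theorem add_zero_zero (hadd : AddSpecNN add) : add zeroNN zeroNN = zeroNN := by
  unfold zeroNN
  rw [hadd.2.2]
  exact ratNN_congr (by norm_num)

theorem add_zero_one (hadd : AddSpecNN add) : add zeroNN oneNN = oneNN := by
  unfold zeroNN oneNN
  rw [hadd.2.2]
  exact ratNN_congr (by norm_num)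

theorem add_one_zero (hadd : AddSpecNN add) : add oneNN zeroNN = oneNN := by
  unfold zeroNN oneNN
  rw [hadd.2.2]
  exact ratNN_congr (by norm_num)

theorem add_ind_isLUB (hadd : AddSpecNN add) (s t : Sierp) :
    IsLUB (⋃ x ∈ Tset s, (add x) '' Tset t) (add (indicatorLR s) (indicatorLR t)) := by
  apply isLUB_nested
  · exact fun x _ => (hadd.1 x).2 (Tset t) (indicatorLR t) (Tset_countable t)
      (Tset_nonempty t) (Tset_directed t) (Tset_isLUB t)
  · exact (hadd.2.1 (indicatorLR t)).2 (Tset s) (indicatorLR s) (Tset_countable s)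
      (Tset_nonempty s) (Tset_directed s) (Tset_isLUB s)

theorem modular_pointwise (hadd : AddSpecNN add) (s t : Sierp) :
    add (indicatorLR s) (indicatorLR t)
      = add (indicatorLR (s.or t)) (indicatorLR (s.and t)) := by
  have h1 := add_ind_isLUB hadd s t
  have h2 := add_ind_isLUB hadd (s.or t) (s.and t)
  have hmem1 : ∀ x ∈ Tset s, ∀ y ∈ Tset t,
      add x y ≤ add (indicatorLR s) (indicatorLR t) :=
    fun x hx y hy => h1.1 (Set.mem_biUnion hx ⟨y, hy, rfl⟩)
  have hmem2 : ∀ x ∈ Tset (s.or t), ∀ y ∈ Tset (s.and t),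
      add x y ≤ add (indicatorLR (s.or t)) (indicatorLR (s.and t)) :=
    fun x hx y hy => h2.1 (Set.mem_biUnion hx ⟨y, hy, rfl⟩)
  apply NN.le_antisymm
  · apply h1.2
    rintro z hz
    simp only [Set.mem_iUnion, Set.mem_image] at hz
    obtain ⟨x, hx, y, hy, rfl⟩ := hz
    rcases hx with rfl | ⟨hs, rfl⟩ <;> rcases hy with rfl | ⟨ht, rfl⟩
    · exact hmem2 zeroNN (Or.inl rfl) zeroNN (Or.inl rfl)
    · rw [add_zero_one hadd, ← add_one_zero hadd]
      exact hmem2 oneNN (Or.inr ⟨Or.inr ht, rfl⟩) zeroNN (Or.inl rfl)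
    · exact hmem2 oneNN (Or.inr ⟨Or.inl hs, rfl⟩) zeroNN (Or.inl rfl)
    · exact hmem2 oneNN (Or.inr ⟨Or.inl hs, rfl⟩) oneNN (Or.inr ⟨⟨hs, ht⟩, rfl⟩)
  · apply h2.2
    rintro z hz
    simp only [Set.mem_iUnion, Set.mem_image] at hz
    obtain ⟨x, hx, y, hy, rfl⟩ := hz
    rcases hx with rfl | ⟨hst, rfl⟩ <;> rcases hy with rfl | ⟨hand, rfl⟩
    · exact hmem1 zeroNN (Or.inl rfl) zeroNN (Or.inl rfl)
    · rw [add_zero_one hadd, ← add_one_zero hadd]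
      exact hmem1 oneNN (Or.inr ⟨hand.1, rfl⟩) zeroNN (Or.inl rfl)
    · rcases hst with hs | ht
      · exact hmem1 oneNN (Or.inr ⟨hs, rfl⟩) zeroNN (Or.inl rfl)
      · rw [add_one_zero hadd, ← add_zero_one hadd]
        exact hmem1 zeroNN (Or.inl rfl) oneNN (Or.inr ⟨ht, rfl⟩)
    · exact hmem1 oneNN (Or.inr ⟨hand.1, rfl⟩) oneNN (Or.inr ⟨hand.2, rfl⟩)

theorem exists_cofinal_chain {α : Type} [Preorder α] {S : Set α}
    (hc : S.Countable) (hne : S.Nonempty) (hd : DirectedOn (· ≤ ·) S) :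
    ∃ t : ℕ → α, Monotone t ∧ (∀ n, t n ∈ S) ∧ ∀ s ∈ S, ∃ n, s ≤ t n := by
  obtain ⟨f, rfl⟩ := hc.exists_eq_range hne
  have hfS : ∀ n, f n ∈ Set.range f := fun n => ⟨n, rfl⟩
  choose z hzS hz1 hz2 using hd
  let t : ℕ → {x // x ∈ Set.range f} :=
    fun n => Nat.rec ⟨f 0, hfS 0⟩
      (fun n p => ⟨z p.1 p.2 (f (n + 1)) (hfS (n + 1)),
        hzS p.1 p.2 (f (n + 1)) (hfS (n + 1))⟩) n
  have ht1 : ∀ n, (t n).1 ≤ (t (n + 1)).1 :=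
    fun n => hz1 (t n).1 (t n).2 (f (n + 1)) (hfS (n + 1))
  have htf : ∀ n, f n ≤ (t n).1 := by
    intro n
    cases n with
    | zero => exact le_refl _
    | succ n => exact hz2 (t n).1 (t n).2 (f (n + 1)) (hfS (n + 1))
  refine ⟨fun n => (t n).1, monotone_nat_of_le_succ ht1, fun n => (t n).2, ?_⟩
  rintro s ⟨n, rfl⟩
  exact ⟨n, htf n⟩

end ValuationHelpers

/-- if `𝓘` is a lower integral on `A`, then `μ(U) := 𝓘(𝟙_U)` defines a
valuation on `A` (ω-continuous, `μ(∅) = 0`, modular), and if `𝓘(𝟙_A) ≤ 1` then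
`μ(A) ≤ 1`. -/
theorem restriction_of_integral_is_valuation {A : Type}
    (add : NNLowerReal → NNLowerReal → NNLowerReal) (hadd : AddSpecNN add)
    (I : (A → NNLowerReal) → NNLowerReal) (hI : IsLowerIntegral add I) :
    IsValuation add (fun U : A → Sierp => I (fun a => indicatorLR (U a))) ∧
      (I (fun _ => indicatorLR Sierp.topS) ≤ oneNN →
        (fun U : A → Sierp => I (fun a => indicatorLR (U a)))
          (fun _ => Sierp.topS) ≤ oneNN)  := by
  set J : (A → Sierp) → (A → NNLowerReal) := fun U a => indicatorLR (U a) with hJdef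
  have Jmono : Monotone J := fun U V h a => indicatorLR_mono (h a)
  have μmono : Monotone (fun U : A → Sierp => I (J U)) := hI.1.1.comp Jmono
  refine ⟨⟨⟨μmono, ?_⟩, ?_, ?_⟩, fun h => h⟩
  · -- continuity
    intro S x hc hne hd hlub
    obtain ⟨t, tmono, tS, tcof⟩ := exists_cofinal_chain hc hne hd
    have hy : IsLUB S (fun a => Sierp.joinSeq (fun n => t n a)) := by
      constructor
      · intro s hs a
        obtain ⟨n, hn⟩ := tcof s hs
        exact fun h => ⟨n, hn a h⟩
      · intro u hu a
        show (∃ n, (t n a).1) → (u a).1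
        rintro ⟨n, hn⟩
        exact hu (tS n) a hn
    have hxy : x = fun a => Sierp.joinSeq (fun n => t n a) := hlub.unique hy
    have hJdir : DirectedOn (· ≤ ·) (J '' S) := by
      rintro _ ⟨u, hu, rfl⟩ _ ⟨v, hv, rfl⟩
      obtain ⟨w, hw, h1, h2⟩ := hd u hu v hv
      exact ⟨J w, ⟨w, hw, rfl⟩, Jmono h1, Jmono h2⟩
    have hJ : IsLUB (J '' S) (J x) := by
      constructor
      · rintro _ ⟨s, hs, rfl⟩
        exact Jmono (hlub.1 hs)
      · rintro g hg a q hq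
        have hq' : q < 0 ∨ ((x a).1 ∧ q < 1) := hq
        rcases hq' with h0 | ⟨hx, h1⟩
        · exact (g a).2 q h0
        · rw [hxy] at hx
          obtain ⟨n, hn⟩ := hx
          exact hg ⟨t n, tS n, rfl⟩ a q (Or.inr ⟨hn, h1⟩)
    have := hI.1.2 (J '' S) (J x) (hc.image J) (hne.image J) hJdir hJ
    show IsLUB ((fun U => I (J U)) '' S) (I (J x))
    rwa [show (fun U => I (J U)) = I ∘ J from rfl, Set.image_comp]
  · -- bottom
    show I (fun _ : A => indicatorLR Sierp.botS) = zeroNN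
    rw [show (fun _ : A => indicatorLR Sierp.botS) = (fun _ => zeroNN) from
      funext fun _ => indicator_bot]
    exact hI.2.1
  · -- modularity
    intro U V
    have e1 := hI.2.2 (fun a => indicatorLR (U a)) (fun a => indicatorLR (V a))
    have e2 := hI.2.2 (fun a => indicatorLR ((U a).or (V a)))
      (fun a => indicatorLR ((U a).and (V a)))
    show add (I fun a => indicatorLR (U a)) (I fun a => indicatorLR (V a))
      = add (I fun a => indicatorLR ((U a).or (V a)))
          (I fun a => indicatorLR ((U a).and (V a)))
    rw [← e1, ← e2]
    congr 1
    funext a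
    exact modular_pointwise hadd (U a) (V a)
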